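/- arXiv:math-ph/0303051 — 3 statements merged into one kernel-verified Lean document; each statement's English description precedes it below -/
import Mathlib

section
/- Let A be a Banach Lie algebra, H with adjoint {H}, and Γ a pseudo-inverse ({H}²Γ = {H}), with N := {H}Γ and R := Id - N. For W ∈ A with {ΓW} bounded, define F(W) := e^{-{ΓW}}(RW) + ψ({ΓW})(NW), where ψ(X) := Σ_{n≥0} (-X)^n/(n+1)!. Then H + F(W) = e^{-{ΓW}}(H + RW). -/
/-!
Since `e^{-X} = 1 + ψ(X)(-X)` as power series, `e^{-{ΓW}} H = H + ψ({ΓW})(-{ΓW} H)`, and by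
antisymmetry `-{ΓW} H = {H}(ΓW) = NW`. Hence `e^{-{ΓW}}(H + RW) = H + ψ({ΓW})(NW) + e^{-{ΓW}}(RW)`.
-/

open NormedSpace Nat

section ExpSeries

variable {𝕂 𝔸 : Type*} [RCLike 𝕂] [NormedRing 𝔸] [NormedAlgebra 𝕂 𝔸] [CompleteSpace 𝔸]

theorem summable_inv_factorial_succ_smul_pow (Y : 𝔸) :
    Summable fun n : ℕ => ((n + 1)! : 𝕂)⁻¹ • Y ^ n := by
  refine .of_norm_bounded (norm_expSeries_summable' (𝕂 := 𝕂) Y) fun n => ?_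
  rw [norm_smul, norm_smul, norm_inv, norm_inv, RCLike.norm_natCast, RCLike.norm_natCast]
  gcongr
  exact n.le_succ

theorem exp_eq_one_add_tsum_mul (Y : 𝔸) :
    exp Y = 1 + (∑' n : ℕ, ((n + 1)! : 𝕂)⁻¹ • Y ^ n) * Y := by
  rw [congrFun (exp_eq_tsum 𝕂) Y, (expSeries_summable' Y).tsum_eq_zero_add,
    ← (summable_inv_factorial_succ_smul_pow Y).tsum_mul_right]
  simp [pow_succ]

theorem exp_apply_eq_add_tsum_apply {E : Type*} [NormedAddCommGroup E] [NormedSpace 𝕂 E]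
    [CompleteSpace E] (T : E →L[𝕂] E) (v : E) :
    exp T v = v + (∑' n : ℕ, ((n + 1)! : 𝕂)⁻¹ • T ^ n) (T v) := by
  rw [exp_eq_one_add_tsum_mul (𝕂 := 𝕂) T]
  rfl

end ExpSeries

theorem stmt_4_general (A : Type*) [NormedAddCommGroup A] [NormedSpace ℝ A] [CompleteSpace A]
    (br : A →L[ℝ] A →L[ℝ] A)
    (anti : ∀ V W : A, br V W = - br W V)
    (H : A) (Γ : A →L[ℝ] A)
    (N R : A →L[ℝ] A) (hN : N = br H * Γ)
    (ψ : (A →L[ℝ] A) → (A →L[ℝ] A))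
    (hψ : ∀ X : A →L[ℝ] A, ψ X = ∑' n : ℕ, (((n + 1).factorial : ℝ)⁻¹) • (-X) ^ n)
    (F : A → A)
    (hF : ∀ W : A, F W = exp (-(br (Γ W))) (R W) + ψ (br (Γ W)) (N W))
    (W : A) :
    H + F W = exp (-(br (Γ W))) (H + R W) := by
  set X := br (Γ W)
  have hXH : -X H = N W := by simp [X, anti (Γ W) H, hN]
  have hexpH : exp (-X) H = H + ψ X (N W) := by
    rw [exp_apply_eq_add_tsum_apply (𝕂 := ℝ), hψ, ← hXH]
    rfl
  rw [hF, map_add, hexpH]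
  abel

/-- Proposition 1: H + F(W) = e^{-{ΓW}} (H + RW), where
F(W) = e^{-{ΓW}} (RW) + ψ({ΓW}) (NW), ψ(X) = Σ (-X)^n/(n+1)!. -/
theorem stmt_4 (A : Type*) [NormedAddCommGroup A] [NormedSpace ℝ A] [CompleteSpace A]
    (br : A →L[ℝ] A →L[ℝ] A)
    (anti : ∀ V W : A, br V W = - br W V)
    (jacobi : ∀ V W : A, br (br V W) = br V * br W - br W * br V)
    (H : A) (Γ : A →L[ℝ] A)
    (hΓ : br H * br H * Γ = br H)
    (N R : A →L[ℝ] A) (hN : N = br H * Γ) (hR : R = 1 - N)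
    (ψ : (A →L[ℝ] A) → (A →L[ℝ] A))
    (hψ : ∀ X : A →L[ℝ] A, ψ X = ∑' n : ℕ, (((n + 1).factorial : ℝ)⁻¹) • (-X) ^ n)
    (F : A → A)
    (hF : ∀ W : A, F W = exp (-(br (Γ W))) (R W) + ψ (br (Γ W)) (N W))
    (W : A) :
    H + F W = exp (-(br (Γ W))) (H + R W) :=
  stmt_4_general A br anti H Γ N R hN ψ hψ F hF W
end

section
/- Let L be a Banach algebra and ∂ a bounded derivation of L (∂(ab) = (∂a)b + a(∂b)). Then for every V ∈ L: ∂(e^V) = ∫₀¹ e^{tV} · (∂V) · e^{(1-t)V} dt. -/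
/-!
Duhamel's trick: `h t = e^{tV} ∂(e^{(1-t)V})` runs from `∂(e^V)` at `t = 0` to `∂1 = 0` at `t = 1`.
Differentiating, `h' t = e^{tV} V ∂(e^{(1-t)V}) - e^{tV} ∂(V e^{(1-t)V})`, and after expanding the
second term by the Leibniz rule only `-e^{tV} (∂V) e^{(1-t)V}` survives; integrate over `[0, 1]`.
-/

open NormedSpace

theorem map_one_eq_zero_of_leibniz {R : Type*} [NonAssocRing R] {D : R → R}
    (leibniz : ∀ a b : R, D (a * b) = D a * b + a * D b) : D 1 = 0 := by
  simpa using leibniz 1 1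

section Duhamel

variable {𝕂 L : Type*} [RCLike 𝕂] [NormedRing L] [NormedAlgebra 𝕂 L] [CompleteSpace L]

theorem hasDerivAt_exp_smul_mul_map_exp_one_sub_smul (D : L →L[𝕂] L)
    (leibniz : ∀ a b : L, D (a * b) = D a * b + a * D b) (V : L) (t : 𝕂) :
    HasDerivAt (fun s : 𝕂 => exp (s • V) * D (exp ((1 - s) • V)))
      (-(exp (t • V) * D V * exp ((1 - t) • V))) t := by
  have hreverse : HasDerivAt (fun s : 𝕂 => exp ((1 - s) • V))
      ((-1 : 𝕂) • (V * exp ((1 - t) • V))) t :=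
    (hasDerivAt_exp_smul_const' V (1 - t)).scomp t ((hasDerivAt_id t).const_sub 1)
  refine ((hasDerivAt_exp_smul_const V t).mul
    (D.hasFDerivAt.comp_hasDerivAt t hreverse)).congr_deriv ?_
  simp only [Function.comp_apply, neg_one_smul, map_neg, leibniz]
  noncomm_ring

theorem continuous_exp_smul_mul_mul_exp_one_sub_smul (A V : L) :
    Continuous fun t : 𝕂 => exp (t • V) * A * exp ((1 - t) • V) := by
  have hexp := (differentiable_exp_smul_const 𝕂 V).continuous
  exact (hexp.mul continuous_const).mul (hexp.comp (continuous_const.sub continuous_id))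

end Duhamel

/-- For a bounded derivation ∂ of a Banach algebra:
∂(e^V) = ∫₀¹ e^{tV} (∂V) e^{(1-t)V} dt. -/
theorem stmt_9 (L : Type*) [NormedRing L] [NormedAlgebra ℝ L] [CompleteSpace L]
    (D : L →L[ℝ] L) (leibniz : ∀ a b : L, D (a * b) = D a * b + a * D b)
    (V : L) :
    D (exp V) = ∫ t in (0:ℝ)..1, exp (t • V) * D V * exp ((1 - t) • V) := by
  have hFTC := intervalIntegral.integral_eq_sub_of_hasDerivAt
    (fun t _ => hasDerivAt_exp_smul_mul_map_exp_one_sub_smul D leibniz V t)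
    ((continuous_exp_smul_mul_mul_exp_one_sub_smul (D V) V).neg.intervalIntegrable 0 1)
  simpa [intervalIntegral.integral_neg, map_one_eq_zero_of_leibniz leibniz] using hFTC.symm
end

section
/- Let L be a Banach algebra, ∂ a bounded derivation, and V ∈ L. Then ∂(e^V) = (ψ̃({V})(∂V)) · e^V, where {V} is the commutator operator ad_V and ψ̃(X) := (e^X - 1)/X = Σ_{n≥0} X^n/(n+1)!. -/
/-!
Differentiating `s ↦ exp (s • V) * ∂ (exp ((1 - s) • V))` with the Leibniz rule gives Duhamel's
formula `∂ (exp V) = ∫₀¹ exp (s • V) * ∂V * exp ((1 - s) • V) ds`. Writing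
`exp ((1 - s) • V) = exp (-s • V) * exp V`, the integrand becomes `exp (s • ad V) (∂V) * exp V`,
since `ad V` is the difference of the commuting operators of left and right multiplication by `V`.
Finally `∫₀¹ exp (s • A) ds = ∑ Aⁿ / (n + 1)!`, by integrating the exponential series termwise.
-/

open NormedSpace Nat ContinuousLinearMap

noncomputable abbrev NormedAlgebra.ratOfReal (𝔸 : Type*) [NormedRing 𝔸] [NormedAlgebra ℝ 𝔸] :
    NormedAlgebra ℚ 𝔸 :=
  .restrictScalars ℚ ℝ 𝔸

-- `exp` does not depend on a choice of `ℚ`-algebra structure, but its API takes one as an instance.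
attribute [local instance] NormedAlgebra.ratOfReal

section RingHom

variable (𝕜 𝔸 : Type*) [NontriviallyNormedField 𝕜] [NormedRing 𝔸] [NormedAlgebra 𝕜 𝔸]

noncomputable def ContinuousLinearMap.mulLeftRingHom : 𝔸 →+* (𝔸 →L[𝕜] 𝔸) where
  toFun := mul 𝕜 𝔸
  map_one' := by ext; simp
  map_mul' _ _ := by ext; simp [mul_assoc]
  map_zero' := map_zero _
  map_add' := map_add _

noncomputable def ContinuousLinearMap.mulRightRingHom : 𝔸ᵐᵒᵖ →+* (𝔸 →L[𝕜] 𝔸) where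
  toFun x := (mul 𝕜 𝔸).flip x.unop
  map_one' := by ext; simp
  map_mul' _ _ := by ext; simp [mul_assoc]
  map_zero' := by ext; simp
  map_add' _ _ := by ext; simp

end RingHom

section Exp

variable {𝔸 : Type*} [NormedRing 𝔸] [NormedAlgebra ℝ 𝔸] [CompleteSpace 𝔸]

theorem exp_mul_sub_mul_flip_apply (x w : 𝔸) :
    exp (mul ℝ 𝔸 x - (mul ℝ 𝔸).flip x) w = exp x * w * exp (-x) := by
  have hcomm : Commute (mul ℝ 𝔸 x) (-(mul ℝ 𝔸).flip x) :=
    Commute.neg_right <| ContinuousLinearMap.ext fun w => (mul_assoc x w x).symm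
  have hleft : exp (mul ℝ 𝔸 x) = mul ℝ 𝔸 (exp x) :=
    (map_exp (mulLeftRingHom ℝ 𝔸) (mul ℝ 𝔸).continuous x).symm
  have hright : exp (-(mul ℝ 𝔸).flip x) = (mul ℝ 𝔸).flip (exp (-x)) := by
    have hneg : -(mul ℝ 𝔸).flip x = mulRightRingHom ℝ 𝔸 (.op (-x)) := by
      ext; simp [mulRightRingHom]
    rw [hneg, ← map_exp (mulRightRingHom ℝ 𝔸)
      ((mul ℝ 𝔸).flip.continuous.comp MulOpposite.continuous_unop), exp_op]
    rfl
  rw [sub_eq_add_neg, exp_add_of_commute hcomm, hleft, hright]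
  simp [mul_assoc]

theorem integral_pow_mul_inv_factorial (n : ℕ) :
    ∫ s in (0:ℝ)..1, s ^ n * (n ! : ℝ)⁻¹ = ((n + 1)! : ℝ)⁻¹ := by
  rw [intervalIntegral.integral_mul_const, integral_pow, Nat.factorial_succ]
  push_cast
  field_simp
  simp

theorem hasSum_integral_exp_smul (a : 𝔸) :
    HasSum (fun n : ℕ => ((n + 1)! : ℝ)⁻¹ • a ^ n) (∫ s in (0:ℝ)..1, exp (s • a)) := by
  simp_rw [← integral_pow_mul_inv_factorial, ← intervalIntegral.integral_smul_const]
  refine intervalIntegral.hasSum_integral_of_dominated_convergence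
    (fun n _ => ‖(n ! : ℝ)⁻¹ • a ^ n‖) (fun n => by fun_prop) (fun n => ?_)
    (.of_forall fun _ _ => norm_expSeries_summable' a) intervalIntegrable_const
    (.of_forall fun s _ => ?_)
  · refine .of_forall fun s hs => ?_
    rw [Set.uIoc_of_le zero_le_one] at hs
    rw [mul_smul, norm_smul (s ^ n), norm_pow, Real.norm_of_nonneg hs.1.le]
    exact mul_le_of_le_one_left (norm_nonneg _) (pow_le_one₀ hs.1.le hs.2)
  · simpa only [smul_pow, smul_smul, mul_comm] using exp_series_hasSum_exp' (𝕂 := ℝ) (s • a)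

theorem apply_exp_eq_integral_of_leibniz (D : 𝔸 →L[ℝ] 𝔸)
    (hD : ∀ a b, D (a * b) = D a * b + a * D b) (x : 𝔸) :
    D (exp x) = ∫ s in (0:ℝ)..1, exp (s • x) * D x * exp ((1 - s) • x) := by
  have hD1 : D 1 = 0 := by simpa using hD 1 1
  have hderiv : ∀ s : ℝ, HasDerivAt (fun t : ℝ => exp (t • x) * D (exp ((1 - t) • x)))
      (-(exp (s • x) * D x * exp ((1 - s) • x))) s := by
    intro s
    have hrev : HasDerivAt (fun t : ℝ => exp ((1 - t) • x)) (-(x * exp ((1 - s) • x))) s := by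
      simpa [Function.comp_def] using
        (hasDerivAt_exp_smul_const' x (1 - s)).scomp s ((hasDerivAt_id s).const_sub 1)
    refine ((hasDerivAt_exp_smul_const x s).mul
      (D.hasFDerivAt.comp_hasDerivAt s hrev)).congr_deriv ?_
    simp only [Function.comp_apply, map_neg, hD]
    noncomm_ring
  have hftc := intervalIntegral.integral_eq_sub_of_hasDerivAt (fun s _ => hderiv s)
    (Continuous.intervalIntegrable (by fun_prop) 0 1)
  simpa [hD1, intervalIntegral.integral_neg] using hftc.symm

end Exp

/-- ∂(e^V) = (ψ̃({V})(∂V))·e^V with ψ̃(X) = Σ Xⁿ/(n+1)! and {V} = ad_V. -/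
theorem stmt_11 (L : Type*) [NormedRing L] [NormedAlgebra ℝ L] [CompleteSpace L]
    (D : L →L[ℝ] L) (leibniz : ∀ a b : L, D (a * b) = D a * b + a * D b)
    (V : L)
    (adV : L →L[ℝ] L)
    (hadV : adV = ContinuousLinearMap.mul ℝ L V - (ContinuousLinearMap.mul ℝ L).flip V)
    (ψ : L →L[ℝ] L)
    (hψ : ψ = ∑' n : ℕ, (((n + 1).factorial : ℝ)⁻¹) • adV ^ n) :
    D (exp V) = ψ (D V) * exp V := by
  have hψ_eq : ψ = ∫ s in (0:ℝ)..1, exp (s • adV) :=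
    hψ.trans (hasSum_integral_exp_smul adV).tsum_eq
  have hconj (s : ℝ) :
      exp (s • V) * D V * exp ((1 - s) • V) = (mul ℝ L).flip (exp V) (exp (s • adV) (D V)) := by
    rw [hadV, smul_sub, ← map_smul, ← map_smul (mul ℝ L).flip, exp_mul_sub_mul_flip_apply,
      sub_smul, one_smul, sub_eq_neg_add,
      exp_add_of_commute ((Commute.refl V).smul_left s).neg_left]
    simp [mul_assoc]
  have hint : IntervalIntegrable (fun s : ℝ => exp (s • adV)) MeasureTheory.volume 0 1 :=
    Continuous.intervalIntegrable (by fun_prop) 0 1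
  calc D (exp V)
      = ∫ s in (0:ℝ)..1, (mul ℝ L).flip (exp V) (exp (s • adV) (D V)) := by
        rw [apply_exp_eq_integral_of_leibniz D leibniz V]
        exact intervalIntegral.integral_congr fun s _ => hconj s
    _ = (mul ℝ L).flip (exp V) ((∫ s in (0:ℝ)..1, exp (s • adV)) (D V)) := by
        rw [intervalIntegral_comp_comm _ (Continuous.intervalIntegrable (by fun_prop) 0 1),
          intervalIntegral_apply hint]
    _ = ψ (D V) * exp V := by rw [hψ_eq]; rfl
end
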